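/- Closed form of the ground state variational problem: Let n ≥ 1, let Q̃ ∈ ℝ^{n×n} be symmetric positive definite, let β ∈ (0,∞)^n with 𝛃 = diag(β), and let h ∈ ℝ^n. Then the infimum over all symmetric matrices Λ ∈ ℝ^{n×n} with Λ − √2·I positive semidefinite of ( (1/4) h^T 𝛃^{−1/2} (Λ − √(Λ² − 2I)) 𝛃^{−1/2} h + Tr(Λ 𝛃^{1/2} Q̃ 𝛃^{1/2}) ) equals GSE(β,h,Q̃), where √(Λ² − 2I) denotes the positive semidefinite square root of Λ² − 2I (which is positive semidefinite since Λ ≥ √2·I). -/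

import Mathlib

noncomputable section

open MeasureTheory ProbabilityTheory Filter Matrix Real
open scoped BigOperators ENNReal NNReal

/-- The law of the disorder: i.i.d. standard Gaussian entries `J i j`. -/
def disorder (N : ℕ) : Measure (Fin N → Fin N → ℝ) :=
  Measure.pi fun _ => Measure.pi fun _ => gaussianReal 0 1

/-- Euclidean dot product on `Fin N → ℝ`. -/
def dot {N : ℕ} (x y : Fin N → ℝ) : ℝ := ∑ i, x i * y i

/-- The 2-spin SK Hamiltonian `H_N(σ) = √N ∑_{ij} J_{ij} σ_i σ_j`. -/
def ham (N : ℕ) (J : Fin N → Fin N → ℝ) (σ : Fin N → ℝ) : ℝ :=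
  Real.sqrt N * ∑ i, ∑ j, J i j * σ i * σ j

/-- The uniform probability measure on the unit sphere of `ℝ^N`
(the normalized spherical measure obtained from Lebesgue measure on
`EuclideanSpace ℝ (Fin N)`). -/
def sphereUniform (N : ℕ) : Measure (Fin N → ℝ) :=
  Measure.map (fun σ : Metric.sphere (0 : EuclideanSpace ℝ (Fin N)) 1 =>
      EuclideanSpace.equiv (Fin N) ℝ σ.val)
    (((volume : Measure (EuclideanSpace ℝ (Fin N))).toSphere Set.univ)⁻¹ •
      (volume : Measure (EuclideanSpace ℝ (Fin N))).toSphere)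

/-- The product of `n` uniform sphere measures: the law of `σ⃗ = (σ^1, …, σ^n)`. -/
def spheres (n N : ℕ) : Measure (Fin n → Fin N → ℝ) :=
  Measure.pi fun _ => sphereUniform N

/-- The set `Q_ε` of replicas whose overlaps are within `ε` of `Q`. -/
def overlapSet (n N : ℕ) (Q : Matrix (Fin n) (Fin n) ℝ) (ε : ℝ) :
    Set (Fin n → Fin N → ℝ) :=
  {σ | ∀ k l, |dot (σ k) (σ l) - Q k l| ≤ ε}

/-- The free energy `F^ε_N(β, h⃗, Q)`. -/
def freeEnergy (n N : ℕ) (β : Fin n → ℝ) (hvec : Fin n → Fin N → ℝ)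
    (Q : Matrix (Fin n) (Fin n) ℝ) (ε : ℝ) (J : Fin N → Fin N → ℝ) : ℝ :=
  (1 / (N : ℝ)) * Real.log (∫ σ in overlapSet n N Q ε,
      Real.exp (∑ k, (β k * ham N J (σ k) + N * dot (hvec k) (σ k))) ∂ spheres n N)

/-- The partition function without external field, `Z^ε_N(β, 0, Q)`. -/
def partitionZ (n N : ℕ) (β : Fin n → ℝ) (Q : Matrix (Fin n) (Fin n) ℝ)
    (ε : ℝ) (J : Fin N → Fin N → ℝ) : ℝ :=
  ∫ σ in overlapSet n N Q ε, Real.exp (∑ k, β k * ham N J (σ k)) ∂ spheres n N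

/-- The overlap matrix `m⃗ m⃗ᵀ`. -/
def overlap {n N : ℕ} (m : Fin n → Fin N → ℝ) : Matrix (Fin n) (Fin n) ℝ :=
  Matrix.of fun k l => dot (m k) (m l)

/-- `βᵀ A^{⊙2} β`, the quadratic form of the entrywise square of `A`. -/
def quadSq {n : ℕ} (β : Fin n → ℝ) (A : Matrix (Fin n) (Fin n) ℝ) : ℝ :=
  ∑ k, ∑ l, β k * β l * (A k l) ^ 2

/-- The TAP free energy `F_TAP(m⃗)`. -/
def FTAP (n N : ℕ) (β : Fin n → ℝ) (hvec : Fin n → Fin N → ℝ)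
    (Q : Matrix (Fin n) (Fin n) ℝ) (J : Fin N → Fin N → ℝ)
    (m : Fin n → Fin N → ℝ) : ℝ :=
  ((N : ℝ) / 2) * Real.log (Q - overlap m).det + ∑ k, β k * ham N J (m k)
    + N * ∑ k, dot (hvec k) (m k) + ((N : ℝ) / 2) * quadSq β (Q - overlap m)

/-- The spectral norm (operator norm with respect to Euclidean norms). -/
def matSpectralNorm {n : ℕ} (A : Matrix (Fin n) (Fin n) ℝ) : ℝ :=
  ‖LinearMap.toContinuousLinearMap (Matrix.toEuclideanLin A)‖

/-- The Frobenius norm of a matrix. -/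
def frob {n : ℕ} (A : Matrix (Fin n) (Fin n) ℝ) : ℝ :=
  Real.sqrt (∑ k, ∑ l, (A k l) ^ 2)

/-- `𝛃^{1/2}`: the diagonal matrix with entries `√(β_k)` (the positive semidefinite
square root of `diag β` for `β ≥ 0`). -/
def sqrtDiag {n : ℕ} (β : Fin n → ℝ) : Matrix (Fin n) (Fin n) ℝ :=
  Matrix.diagonal fun k => Real.sqrt (β k)

/-- `𝛃^{-1/2}`: the diagonal matrix with entries `(√(β_k))⁻¹`. -/
def invSqrtDiag {n : ℕ} (β : Fin n → ℝ) : Matrix (Fin n) (Fin n) ℝ :=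
  Matrix.diagonal fun k => (Real.sqrt (β k))⁻¹

/-- The Plefka set `Plef_n(Q, β)` of `n × n` constraint matrices: entries in `[-1,1]`,
`0 ≤ Q̃ < Q` in the Loewner order, and `‖𝛃^{1/2}(Q - Q̃)𝛃^{1/2}‖₂ ≤ 1/√2`. -/
def plefkaMat (n : ℕ) (Q : Matrix (Fin n) (Fin n) ℝ) (β : Fin n → ℝ) :
    Set (Matrix (Fin n) (Fin n) ℝ) :=
  {Qt | (∀ k l, |Qt k l| ≤ 1) ∧ Qt.PosSemidef ∧ (Q - Qt).PosDef ∧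
    matSpectralNorm (sqrtDiag β * (Q - Qt) * sqrtDiag β) ≤ 1 / Real.sqrt 2}

/-- The Plefka set `Plef_N(Q, β)` of magnetization vectors. -/
def plefkaMag (n N : ℕ) (Q : Matrix (Fin n) (Fin n) ℝ) (β : Fin n → ℝ) :
    Set (Fin n → Fin N → ℝ) :=
  {m | overlap m ∈ plefkaMat n Q β}

open scoped Classical in
/-- The positive semidefinite square root of a positive semidefinite matrix
(junk value `0` off the positive semidefinite matrices). -/
def msqrt {n : ℕ} (A : Matrix (Fin n) (Fin n) ℝ) : Matrix (Fin n) (Fin n) ℝ :=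
  if h : A.PosSemidef then
    h.1.eigenvectorUnitary.1 * Matrix.diagonal ((↑) ∘ (√·) ∘ h.1.eigenvalues) *
      (star h.1.eigenvectorUnitary : Matrix (Fin n) (Fin n) ℝ)
  else 0

/-- The ground state energy functional `GSE(β, h, Q̃)`. -/
def GSE (n : ℕ) (β h : Fin n → ℝ) (Qt : Matrix (Fin n) (Fin n) ℝ) : ℝ :=
  Real.sqrt 2 * Matrix.trace (msqrt
    (msqrt ((1 / 2 : ℝ) • Matrix.vecMulVec h h
        + Matrix.diagonal β * Qt * Matrix.diagonal β) * Qt *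
      msqrt ((1 / 2 : ℝ) • Matrix.vecMulVec h h
        + Matrix.diagonal β * Qt * Matrix.diagonal β)))

/-- The high temperature region `HT(Q)`. -/
def HTset (n : ℕ) (Q : Matrix (Fin n) (Fin n) ℝ) : Set (Fin n → ℝ) :=
  {β | (∀ k, 0 ≤ β k) ∧ matSpectralNorm (sqrtDiag β * Q * sqrtDiag β) ≤ 1 / Real.sqrt 2}

/-- The second moment functional `V(A)`. -/
def secondMomentV (n : ℕ) (Q : Matrix (Fin n) (Fin n) ℝ) (β : Fin n → ℝ)
    (A : Matrix (Fin n) (Fin n) ℝ) : ℝ :=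
  quadSq β A + (1 / 2) * Real.log (Matrix.fromBlocks Q A Aᵀ Q).det

/-- The effective constraint matrix `Q̂(m⃗)`. -/
def Qhat {n N : ℕ} (Q : Matrix (Fin n) (Fin n) ℝ) (m : Fin n → Fin N → ℝ) :
    Matrix (Fin n) (Fin n) ℝ :=
  Matrix.of fun k l => (Q k l - dot (m k) (m l)) /
    (Real.sqrt (1 - dot (m k) (m k)) * Real.sqrt (1 - dot (m l) (m l)))

/-- A vector of `ℝ^d` viewed in `ℝ^N` via a linear isometric embedding of
Euclidean spaces (whose range is a subspace of dimension `d`). -/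
def emb {d N : ℕ} (φ : EuclideanSpace ℝ (Fin d) →ₗᵢ[ℝ] EuclideanSpace ℝ (Fin N))
    (x : Fin d → ℝ) : Fin N → ℝ :=
  EuclideanSpace.equiv (Fin N) ℝ (φ ((EuclideanSpace.equiv (Fin d) ℝ).symm x))

/-! Put `S = Λ - √(Λ² - 2I)`. For `Λ ≥ √2 I` the matrix `S` is positive definite with
`Λ = S/2 + S⁻¹`, and conversely every `0 < S ≤ √2 I` arises from `Λ = S/2 + S⁻¹ ≥ √2 I`.
In the variable `T = 𝛃^{-1/2} S 𝛃^{-1/2}` the objective becomes `½ Tr(T M) + Tr(T⁻¹ Q̃)` with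
`M = ½ h hᵀ + 𝛃 Q̃ 𝛃`. Writing `G = M^{1/2}` and `E = (G Q̃ G)^{1/2}`, the trace AM-GM inequality
`Tr((E - aP) P⁻¹ (E - aP)) ≥ 0` for `P = G T G` bounds this below by `√2 Tr E`, with equality
at `T = √2 G⁻¹ E G⁻¹`. That `T` comes from an admissible `S ≤ √2 I`: since `M ≥ 𝛃 Q̃ 𝛃`,
`E² ≤ (G 𝛃⁻¹ G)²`, hence `E ≤ G 𝛃⁻¹ G` by operator monotonicity of the square root. -/

open scoped MatrixOrder

namespace Matrix

variable {m : Type*} [Fintype m] [DecidableEq m]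

lemma commute_nonsing_inv_left {α : Type*} [CommRing α] {A B : Matrix m m α}
    (h : Commute A B) : Commute A⁻¹ B := by
  by_cases hA : IsUnit A
  · lift A to (Matrix m m α)ˣ using hA
    rw [← coe_units_inv]
    exact h.units_inv_left
  · rw [nonsing_inv_eq_ringInverse, Ring.inverse_non_unit _ hA]
    exact Commute.zero_left B

lemma PosDef.isUnit_det {A : Matrix m m ℝ} (hA : A.PosDef) : IsUnit A.det :=
  (isUnit_iff_isUnit_det A).mp hA.isUnit

lemma PosDef.cfcSqrt {A : Matrix m m ℝ} (hA : A.PosDef) : (CFC.sqrt A).PosDef :=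
  hA.isStrictlyPositive.sqrt.posDef

lemma PosDef.conjugate {A C : Matrix m m ℝ} (hA : A.PosDef) (hC : C.PosDef) :
    (C * A * C).PosDef := by
  have := hA.conjTranspose_mul_mul_same (mulVec_injective_of_isUnit hC.isUnit)
  rwa [hC.1.eq] at this

lemma PosDef.two_mul_mul_trace_le {P E : Matrix m m ℝ} (hP : P.PosDef) (hE : E.IsHermitian)
    (a : ℝ) : 2 * a * E.trace ≤ a ^ 2 * P.trace + (P⁻¹ * (E * E)).trace := by
  have hPP : P * P⁻¹ = 1 := mul_nonsing_inv P hP.isUnit_det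
  have hPP' : P⁻¹ * P = 1 := nonsing_inv_mul P hP.isUnit_det
  have hsq : 0 ≤ (E - a • P) * P⁻¹ * (E - a • P) :=
    (hE.sub (hP.1.smul (IsSelfAdjoint.all a))).isSelfAdjoint.conjugate_nonneg
      hP.inv.posSemidef.nonneg
  have hexp : (E - a • P) * P⁻¹ * (E - a • P) = E * P⁻¹ * E - (2 * a) • E + a ^ 2 • P := by
    simp only [sub_mul, mul_sub, smul_mul_assoc, mul_smul_comm, Matrix.mul_assoc, hPP, hPP',
      Matrix.mul_one, Matrix.one_mul]
    module
  have := (nonneg_iff_posSemidef.mp hsq).trace_nonneg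
  rw [hexp, trace_add, trace_sub, trace_smul, trace_smul, smul_eq_mul, smul_eq_mul,
    Matrix.mul_assoc, trace_mul_comm, Matrix.mul_assoc] at this
  linarith

lemma le_of_mul_self_le_mul_self {E K : Matrix m m ℝ} (hE : 0 ≤ E) (hK : K.PosDef)
    (h : E * E ≤ K * K) : E ≤ K := by
  rw [nonneg_iff_posSemidef] at hE
  have hH : (K - E).IsHermitian := hK.1.sub hE.1
  refine hH.posSemidef_iff_eigenvalues_nonneg.mpr fun i => show (0 : ℝ) ≤ _ from ?_
  set μ := hH.eigenvalues i
  set v : m → ℝ := ⇑(hH.eigenvectorBasis i)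
  have hv : (K - E) *ᵥ v = μ • v := hH.mulVec_eigenvectorBasis i
  have hv0 : v ≠ 0 := fun h0 => hH.eigenvectorBasis.orthonormal.ne_zero i (by
    ext j; exact congrFun h0 j)
  have hpos : 0 < v ⬝ᵥ (K + E) *ᵥ v := by
    simpa using (hK.add_posSemidef hE).dotProduct_mulVec_pos hv0
  have hsq : 0 ≤ v ⬝ᵥ (K * K - E * E) *ᵥ v := by
    simpa using (le_iff.mp h).dotProduct_mulVec_nonneg v
  -- `K² - E²` symmetrizes `(K + E)(K - E)`, whose quadratic form at `v` is `μ vᵀ(K + E)v`.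
  have hsymm : (K * K - E * E) + (K * K - E * E) = (K + E) * (K - E) + (K - E) * (K + E) := by
    noncomm_ring
  have h1 : v ⬝ᵥ ((K + E) * (K - E)) *ᵥ v = μ * (v ⬝ᵥ (K + E) *ᵥ v) := by
    rw [← mulVec_mulVec, hv, mulVec_smul, dotProduct_smul, smul_eq_mul]
  have h2 : v ⬝ᵥ ((K - E) * (K + E)) *ᵥ v = μ * (v ⬝ᵥ (K + E) *ᵥ v) := by
    rw [← mulVec_mulVec, dotProduct_mulVec, ← mulVec_transpose,
      ← conjTranspose_eq_transpose_of_trivial, hH.eq, hv, smul_dotProduct, smul_eq_mul]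
  have hquad : v ⬝ᵥ (K * K - E * E) *ᵥ v = μ * (v ⬝ᵥ (K + E) *ᵥ v) := by
    have := congrArg (fun A => v ⬝ᵥ A *ᵥ v) hsymm
    rw [add_mulVec, dotProduct_add, add_mulVec, dotProduct_add, h1, h2] at this
    linarith
  exact (mul_nonneg_iff_of_pos_right hpos).mp (hquad ▸ hsq)

lemma mul_self_le_mul_self_of_commute {A B : Matrix m m ℝ} (hA : 0 ≤ A) (hAB : A ≤ B)
    (h : Commute A B) : A * A ≤ B * B := by
  have hfactor : (B - A) * (B + A) = B * B - A * A := by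
    rw [sub_mul, mul_add, mul_add, h.eq]
    abel
  rw [← sub_nonneg, ← hfactor]
  exact Commute.mul_nonneg (sub_nonneg.mpr hAB) (add_nonneg (hA.trans hAB) hA)
    ((((Commute.refl B).sub_left h).add_right (h.symm.sub_left (Commute.refl A))))

lemma sqrt_two_smul_one_mul_self : (√2 • 1 : Matrix m m ℝ) * (√2 • 1) = (2 : ℝ) • 1 := by
  rw [smul_mul_smul_comm, Real.mul_self_sqrt zero_le_two, Matrix.one_mul]

lemma posDef_sub_sqrt_and_eq_half_smul_add_inv {Λ : Matrix m m ℝ}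
    (hle : √2 • (1 : Matrix m m ℝ) ≤ Λ) :
    (Λ - CFC.sqrt (Λ * Λ - (2 : ℝ) • 1)).PosDef ∧
      Λ = (1 / 2 : ℝ) • (Λ - CFC.sqrt (Λ * Λ - (2 : ℝ) • 1))
        + (Λ - CFC.sqrt (Λ * Λ - (2 : ℝ) • 1))⁻¹ := by
  have hc : (√2 • (1 : Matrix m m ℝ)).PosDef := PosDef.one.smul (Real.sqrt_pos.mpr two_pos)
  have hΛ : Λ.PosDef := by simpa using hc.add_posSemidef (le_iff.mp hle)
  have hnonneg : 0 ≤ Λ * Λ - (2 : ℝ) • 1 := by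
    rw [sub_nonneg, ← sqrt_two_smul_one_mul_self]
    exact mul_self_le_mul_self_of_commute hc.posSemidef.nonneg hle
      ((Commute.one_left Λ).smul_left _)
  have hΛR : Commute Λ (CFC.sqrt (Λ * Λ - (2 : ℝ) • 1)) := by
    rw [CFC.sqrt_eq_cfc]
    refine (Commute.cfc_nnreal ?_ _).symm
    simp only [Commute, SemiconjBy, sub_mul, mul_sub, smul_mul_assoc, mul_smul_comm,
      Matrix.one_mul, Matrix.mul_one, Matrix.mul_assoc]
  set R := CFC.sqrt (Λ * Λ - (2 : ℝ) • 1)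
  have hRR : R * R = Λ * Λ - (2 : ℝ) • 1 := CFC.sqrt_mul_sqrt_self _ hnonneg
  have hplus : (Λ + R).PosDef :=
    hΛ.add_posSemidef (nonneg_iff_posSemidef.mp (CFC.sqrt_nonneg _))
  have hprod : (Λ - R) * (Λ + R) = (2 : ℝ) • 1 := by
    rw [sub_mul, mul_add, mul_add, hΛR.eq, hRR]
    abel
  refine ⟨?_, ?_⟩
  · have : Λ - R = (2 : ℝ) • (Λ + R)⁻¹ := by
      rw [← Matrix.one_mul (Λ + R)⁻¹, ← smul_mul_assoc, ← hprod, Matrix.mul_assoc,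
        mul_nonsing_inv _ hplus.isUnit_det, Matrix.mul_one]
    rw [this]
    exact hplus.inv.smul two_pos
  · have hinv : (Λ - R)⁻¹ = (1 / 2 : ℝ) • (Λ + R) := by
      refine inv_eq_right_inv ?_
      rw [mul_smul_comm, hprod, smul_smul]
      norm_num
    rw [hinv]
    module

lemma sqrt_two_le_half_smul_add_inv {S : Matrix m m ℝ} (hS : S.PosDef) :
    √2 • (1 : Matrix m m ℝ) ≤ (1 / 2 : ℝ) • S + S⁻¹ := by
  have hSS : S * S⁻¹ = 1 := mul_nonsing_inv _ hS.isUnit_det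
  have hSS' : S⁻¹ * S = 1 := nonsing_inv_mul _ hS.isUnit_det
  have hsq : (1 / 2 : ℝ) • S + S⁻¹ - √2 • 1
      = (1 / 2 : ℝ) • ((S - √2 • 1) * S⁻¹ * (S - √2 • 1)) := by
    simp only [sub_mul, mul_sub, smul_mul_assoc, mul_smul_comm, Matrix.one_mul, Matrix.mul_one,
      hSS, hSS']
    linear_combination (norm := module) (Real.mul_self_sqrt zero_le_two) • ((-1 / 2 : ℝ) • S⁻¹)
  rw [← sub_nonneg, hsq]
  refine smul_nonneg (by norm_num) ?_
  exact (hS.1.sub (PosSemidef.one.smul (Real.sqrt_nonneg 2)).1).isSelfAdjoint.conjugate_nonneg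
    hS.inv.posSemidef.nonneg

lemma half_smul_add_inv_sub_sqrt {S : Matrix m m ℝ} (hS : S.PosDef)
    (hle : S ≤ √2 • (1 : Matrix m m ℝ)) :
    (1 / 2 : ℝ) • S + S⁻¹ - CFC.sqrt (((1 / 2 : ℝ) • S + S⁻¹) * ((1 / 2 : ℝ) • S + S⁻¹)
      - (2 : ℝ) • 1) = S := by
  have hSS : S * S⁻¹ = 1 := mul_nonsing_inv _ hS.isUnit_det
  have hSS' : S⁻¹ * S = 1 := nonsing_inv_mul _ hS.isUnit_det
  have hsq : 0 ≤ (2 : ℝ) • 1 - S * S := by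
    rw [sub_nonneg, ← sqrt_two_smul_one_mul_self]
    exact mul_self_le_mul_self_of_commute hS.posSemidef.nonneg hle
      ((Commute.one_right S).smul_right _)
  -- The square root is `S⁻¹ - S/2 = ½ S⁻¹ (2 - S²)`, which is nonnegative because `S ≤ √2`.
  have hD : 0 ≤ S⁻¹ - (1 / 2 : ℝ) • S := by
    have hcomm : Commute S⁻¹ ((2 : ℝ) • 1 - S * S) := by
      refine commute_nonsing_inv_left ?_
      simp only [Commute, SemiconjBy, mul_sub, sub_mul, mul_smul_comm, smul_mul_assoc,
        Matrix.one_mul, Matrix.mul_one, Matrix.mul_assoc]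
    have := smul_nonneg (by norm_num : (0 : ℝ) ≤ 1 / 2)
      (hcomm.mul_nonneg hS.inv.posSemidef.nonneg hsq)
    convert this using 1
    simp only [mul_sub, mul_smul_comm, Matrix.mul_one, ← Matrix.mul_assoc, hSS', Matrix.one_mul]
    module
  have hDD : (S⁻¹ - (1 / 2 : ℝ) • S) * (S⁻¹ - (1 / 2 : ℝ) • S)
      = ((1 / 2 : ℝ) • S + S⁻¹) * ((1 / 2 : ℝ) • S + S⁻¹) - (2 : ℝ) • 1 := by
    simp only [sub_mul, mul_sub, add_mul, mul_add, smul_mul_assoc, mul_smul_comm, hSS, hSS']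
    module
  rw [← hDD, CFC.sqrt_mul_self _ hD]
  module

def traceFunctional (M Q T : Matrix m m ℝ) : ℝ :=
  (1 / 2) * (T * M).trace + (T⁻¹ * Q).trace

def traceFunctionalMinimizer (M Q : Matrix m m ℝ) : Matrix m m ℝ :=
  √2 • ((CFC.sqrt M)⁻¹ * CFC.sqrt (CFC.sqrt M * Q * CFC.sqrt M) * (CFC.sqrt M)⁻¹)

lemma sqrt_two_mul_trace_sqrt_le_traceFunctional {M Q T : Matrix m m ℝ} (hM : M.PosDef)
    (hQ : 0 ≤ Q) (hT : T.PosDef) :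
    √2 * (CFC.sqrt (CFC.sqrt M * Q * CFC.sqrt M)).trace ≤ traceFunctional M Q T := by
  set G := CFC.sqrt M
  have hG : G.PosDef := hM.cfcSqrt
  have hGQG : 0 ≤ G * Q * G := hG.1.isSelfAdjoint.conjugate_nonneg hQ
  have hamgm := (hT.conjugate hG).two_mul_mul_trace_le
    (nonneg_iff_posSemidef.mp (CFC.sqrt_nonneg (G * Q * G))).1 (√2)⁻¹
  have h1 : (G * T * G).trace = (T * M).trace := by
    rw [trace_mul_comm, ← Matrix.mul_assoc, CFC.sqrt_mul_sqrt_self M hM.posSemidef.nonneg,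
      trace_mul_comm]
  have h2 : ((G * T * G)⁻¹ * (CFC.sqrt (G * Q * G) * CFC.sqrt (G * Q * G))).trace
      = (T⁻¹ * Q).trace := by
    rw [CFC.sqrt_mul_sqrt_self _ hGQG, Matrix.mul_inv_rev, Matrix.mul_inv_rev]
    calc (G⁻¹ * (T⁻¹ * G⁻¹) * (G * Q * G)).trace
        = (G⁻¹ * (T⁻¹ * (G⁻¹ * (G * (Q * G))))).trace := by simp only [Matrix.mul_assoc]
      _ = (T⁻¹ * (Q * (G * G⁻¹))).trace := by
        rw [nonsing_inv_mul_cancel_left _ _ hG.isUnit_det, trace_mul_comm]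
        simp only [Matrix.mul_assoc]
      _ = (T⁻¹ * Q).trace := by rw [mul_nonsing_inv _ hG.isUnit_det, Matrix.mul_one]
  have h3 : (2 : ℝ) * (√2)⁻¹ = √2 := by
    field_simp
    exact (Real.sq_sqrt zero_le_two).symm
  have h4 : ((√2)⁻¹) ^ 2 = (1 / 2 : ℝ) := by
    rw [inv_pow, Real.sq_sqrt zero_le_two, one_div]
  rwa [h1, h2, h3, h4] at hamgm

lemma posDef_traceFunctionalMinimizer {M Q : Matrix m m ℝ} (hM : M.PosDef) (hQ : Q.PosDef) :
    (traceFunctionalMinimizer M Q).PosDef :=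
  ((hQ.conjugate hM.cfcSqrt).cfcSqrt.conjugate hM.cfcSqrt.inv).smul (Real.sqrt_pos.mpr two_pos)

lemma traceFunctional_traceFunctionalMinimizer {M Q : Matrix m m ℝ} (hM : M.PosDef)
    (hQ : Q.PosDef) :
    traceFunctional M Q (traceFunctionalMinimizer M Q)
      = √2 * (CFC.sqrt (CFC.sqrt M * Q * CFC.sqrt M)).trace := by
  have hGG : CFC.sqrt M * CFC.sqrt M = M := CFC.sqrt_mul_sqrt_self M hM.posSemidef.nonneg
  have hEE := CFC.sqrt_mul_sqrt_self _ (hQ.conjugate hM.cfcSqrt).posSemidef.nonneg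
  have hE := (hQ.conjugate hM.cfcSqrt).cfcSqrt
  have hG := hM.cfcSqrt
  unfold traceFunctionalMinimizer
  set G := CFC.sqrt M
  set E := CFC.sqrt (G * Q * G)
  have hinv : (√2 • (G⁻¹ * E * G⁻¹))⁻¹ = (√2)⁻¹ • (G * E⁻¹ * G) := by
    refine inv_eq_right_inv ?_
    rw [smul_mul_smul_comm, mul_inv_cancel₀ (Real.sqrt_ne_zero'.mpr two_pos), one_smul]
    simp only [Matrix.mul_assoc, nonsing_inv_mul_cancel_left _ _ hG.isUnit_det,
      mul_nonsing_inv_cancel_left _ _ hE.isUnit_det, nonsing_inv_mul _ hG.isUnit_det]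
  have h1 : (√2 • (G⁻¹ * E * G⁻¹) * M).trace = √2 * E.trace := by
    rw [smul_mul_assoc, trace_smul, smul_eq_mul, ← hGG, Matrix.mul_assoc,
      ← Matrix.mul_assoc G⁻¹ G, nonsing_inv_mul _ hG.isUnit_det, Matrix.one_mul,
      trace_mul_comm, ← Matrix.mul_assoc, mul_nonsing_inv _ hG.isUnit_det, Matrix.one_mul]
  have h2 : ((√2 • (G⁻¹ * E * G⁻¹))⁻¹ * Q).trace = (√2)⁻¹ * E.trace := by
    rw [hinv, smul_mul_assoc, trace_smul, smul_eq_mul, Matrix.mul_assoc, trace_mul_comm,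
      Matrix.mul_assoc, ← Matrix.mul_assoc, ← Matrix.mul_assoc, ← hEE, Matrix.mul_assoc,
      mul_nonsing_inv _ hE.isUnit_det, Matrix.mul_one]
  rw [traceFunctional, h1, h2]
  field_simp
  rw [Real.sq_sqrt zero_le_two]
  ring

lemma mul_traceFunctionalMinimizer_mul_le {M Q D : Matrix m m ℝ} (hM : M.PosDef) (hQ : 0 ≤ Q)
    (hD : D.PosDef) (hDQD : D * D * Q * (D * D) ≤ M) :
    D * traceFunctionalMinimizer M Q * D ≤ √2 • 1 := by
  have hGG : CFC.sqrt M * CFC.sqrt M = M := CFC.sqrt_mul_sqrt_self M hM.posSemidef.nonneg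
  have hG := hM.cfcSqrt
  have hEE := CFC.sqrt_mul_sqrt_self _ (hG.1.isSelfAdjoint.conjugate_nonneg hQ)
  have hE := CFC.sqrt_nonneg (CFC.sqrt M * Q * CFC.sqrt M)
  have hC : (D * D).PosDef := by simpa using PosDef.one.conjugate hD
  unfold traceFunctionalMinimizer
  set G := CFC.sqrt M
  set E := CFC.sqrt (G * Q * G)
  set C := D * D
  -- Comparing squares: `E² = G Q G ≤ G C⁻¹ M C⁻¹ G = (G C⁻¹ G)²` since `C Q C ≤ M = G²`.
  have hKK : E * E ≤ (G * C⁻¹ * G) * (G * C⁻¹ * G) := by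
    have := star_right_conjugate_le_conjugate hDQD (G * C⁻¹)
    simp only [star_mul, hG.1.isSelfAdjoint.star_eq, hC.inv.1.isSelfAdjoint.star_eq] at this
    convert this using 1
    · rw [hEE]
      simp only [Matrix.mul_assoc, nonsing_inv_mul_cancel_left _ _ hC.isUnit_det,
        mul_nonsing_inv_cancel_left _ _ hC.isUnit_det]
    · rw [← hGG]
      simp only [Matrix.mul_assoc]
  have hEK := le_of_mul_self_le_mul_self hE (hC.inv.conjugate hG) hKK
  have hGKG : D * (G⁻¹ * (G * C⁻¹ * G) * G⁻¹) * D = 1 := by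
    simp only [C, Matrix.mul_inv_rev, Matrix.mul_assoc, Matrix.mul_one,
      nonsing_inv_mul_cancel_left _ _ hG.isUnit_det, mul_nonsing_inv _ hG.isUnit_det,
      mul_nonsing_inv_cancel_left _ _ hD.isUnit_det, nonsing_inv_mul _ hD.isUnit_det]
  rw [← hGKG, mul_smul_comm, smul_mul_assoc]
  exact smul_le_smul_of_nonneg_left (hD.1.isSelfAdjoint.conjugate_le_conjugate
    (hG.inv.1.isSelfAdjoint.conjugate_le_conjugate hEK)) (Real.sqrt_nonneg 2)

lemma quadratic_add_trace_eq_traceFunctional {D S Λ Q : Matrix m m ℝ} (hD : D.PosDef)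
    (hΛ : Λ = (1 / 2 : ℝ) • S + S⁻¹) (h : m → ℝ) :
    (1 / 4) * h ⬝ᵥ ((D⁻¹ * S * D⁻¹) *ᵥ h) + (Λ * (D * Q * D)).trace
      = traceFunctional ((1 / 2 : ℝ) • vecMulVec h h + D * D * Q * (D * D)) Q (D⁻¹ * S * D⁻¹) := by
  have hquad : h ⬝ᵥ ((D⁻¹ * S * D⁻¹) *ᵥ h) = (D⁻¹ * S * D⁻¹ * vecMulVec h h).trace := by
    rw [mul_vecMulVec, trace_vecMulVec, dotProduct_comm]
  have hS : (D⁻¹ * S * D⁻¹ * (D * D * Q * (D * D))).trace = (S * (D * Q * D)).trace := by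
    calc (D⁻¹ * S * D⁻¹ * (D * D * Q * (D * D))).trace
        = (D⁻¹ * (S * (D * Q * D) * D)).trace := by
          simp only [Matrix.mul_assoc, nonsing_inv_mul_cancel_left _ _ hD.isUnit_det]
      _ = (S * (D * Q * D)).trace := by
          rw [trace_mul_comm, Matrix.mul_assoc _ D, mul_nonsing_inv _ hD.isUnit_det,
            Matrix.mul_one]
  have hSinv : ((D⁻¹ * S * D⁻¹)⁻¹ * Q).trace = (S⁻¹ * (D * Q * D)).trace := by
    rw [Matrix.mul_inv_rev, Matrix.mul_inv_rev, nonsing_inv_nonsing_inv _ hD.isUnit_det,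
      Matrix.mul_assoc, trace_mul_comm]
    simp only [Matrix.mul_assoc]
  rw [traceFunctional, hΛ, Matrix.mul_add, trace_add, hquad, add_mul, trace_add, smul_mul_assoc,
    trace_smul, mul_smul_comm, trace_smul, hS, hSinv, smul_eq_mul, smul_eq_mul]
  ring

end Matrix

lemma msqrt_eq_cfcSqrt {n : ℕ} (A : Matrix (Fin n) (Fin n) ℝ) : msqrt A = CFC.sqrt A := by
  by_cases hA : A.PosSemidef
  · rw [msqrt, dif_pos hA, CFC.sqrt_eq_real_sqrt A hA.nonneg, cfcₙ_eq_cfc (hf0 := Real.sqrt_zero),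
      hA.1.cfc_eq]
    rfl
  · rw [msqrt, dif_neg hA, CFC.sqrt_of_not_nonneg (by rwa [nonneg_iff_posSemidef])]

section Diagonal

variable {n : ℕ} {β : Fin n → ℝ}

lemma posDef_sqrtDiag (hβ : ∀ k, 0 < β k) : (sqrtDiag β).PosDef :=
  posDef_diagonal_iff.mpr fun k => Real.sqrt_pos.mpr (hβ k)

lemma sqrtDiag_mul_self (hβ : ∀ k, 0 ≤ β k) : sqrtDiag β * sqrtDiag β = diagonal β := by
  rw [sqrtDiag, diagonal_mul_diagonal]
  exact congrArg diagonal (funext fun k => Real.mul_self_sqrt (hβ k))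

lemma invSqrtDiag_eq_inv (hβ : ∀ k, 0 < β k) : invSqrtDiag β = (sqrtDiag β)⁻¹ := by
  refine (inv_eq_right_inv ?_).symm
  rw [sqrtDiag, invSqrtDiag, diagonal_mul_diagonal, ← diagonal_one]
  exact congrArg diagonal (funext fun k => mul_inv_cancel₀ (Real.sqrt_pos.mpr (hβ k)).ne')

lemma objective_eq_traceFunctional (hβ : ∀ k, 0 < β k) (Qt : Matrix (Fin n) (Fin n) ℝ)
    (h : Fin n → ℝ) {Λ S : Matrix (Fin n) (Fin n) ℝ}
    (hS : Λ - CFC.sqrt (Λ * Λ - (2 : ℝ) • 1) = S) (hΛ : Λ = (1 / 2 : ℝ) • S + S⁻¹) :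
    (1 / 4) * dot h ((invSqrtDiag β * (Λ - msqrt (Λ * Λ - (2 : ℝ) • 1)) * invSqrtDiag β) *ᵥ h)
        + (Λ * (sqrtDiag β * Qt * sqrtDiag β)).trace
      = traceFunctional ((1 / 2 : ℝ) • vecMulVec h h + diagonal β * Qt * diagonal β) Qt
          ((sqrtDiag β)⁻¹ * S * (sqrtDiag β)⁻¹) := by
  rw [msqrt_eq_cfcSqrt, hS, invSqrtDiag_eq_inv hβ, ← sqrtDiag_mul_self fun k => (hβ k).le]
  exact quadratic_add_trace_eq_traceFunctional (posDef_sqrtDiag hβ) hΛ h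

end Diagonal

theorem ground_state_closed_form_general (n : ℕ)
    (Qt : Matrix (Fin n) (Fin n) ℝ) (hQtpd : Qt.PosDef)
    (β : Fin n → ℝ) (hβ : ∀ k, 0 < β k) (h : Fin n → ℝ) :
    sInf ((fun Λ : Matrix (Fin n) (Fin n) ℝ =>
        (1 / 4) * dot h (Matrix.mulVec
            (invSqrtDiag β *
              (Λ - msqrt (Λ * Λ - (2 : ℝ) • (1 : Matrix (Fin n) (Fin n) ℝ))) *
              invSqrtDiag β) h)
          + Matrix.trace (Λ * (sqrtDiag β * Qt * sqrtDiag β))) ''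
      {Λ : Matrix (Fin n) (Fin n) ℝ | Λ.IsSymm ∧
        (Λ - Real.sqrt 2 • (1 : Matrix (Fin n) (Fin n) ℝ)).PosSemidef})
    = GSE n β h Qt := by
  have hD := posDef_sqrtDiag hβ
  set M := (1 / 2 : ℝ) • vecMulVec h h + diagonal β * Qt * diagonal β
  have hhalf : 0 ≤ (1 / 2 : ℝ) • vecMulVec h h :=
    ((posSemidef_vecMulVec_self_star h).smul (by norm_num)).nonneg
  have hM : M.PosDef := PosDef.posSemidef_add (nonneg_iff_posSemidef.mp hhalf)
    (hQtpd.conjugate (posDef_diagonal_iff.mpr hβ))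
  rw [GSE, msqrt_eq_cfcSqrt, msqrt_eq_cfcSqrt]
  refine IsLeast.csInf_eq ⟨?_, ?_⟩
  · set D := sqrtDiag β
    set S := D * traceFunctionalMinimizer M Qt * D
    have hS : S.PosDef := (posDef_traceFunctionalMinimizer hM hQtpd).conjugate hD
    have hS2 : S ≤ √2 • 1 := mul_traceFunctionalMinimizer_mul_le hM hQtpd.posSemidef.nonneg hD
      (by rw [sqrtDiag_mul_self fun k => (hβ k).le]; exact le_add_of_nonneg_left hhalf)
    have hT : D⁻¹ * S * D⁻¹ = traceFunctionalMinimizer M Qt := by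
      simp only [S, Matrix.mul_assoc, nonsing_inv_mul_cancel_left _ _ hD.isUnit_det,
        mul_nonsing_inv _ hD.isUnit_det, Matrix.mul_one]
    refine ⟨(1 / 2 : ℝ) • S + S⁻¹, ⟨?_, sqrt_two_le_half_smul_add_inv hS⟩, ?_⟩
    · exact isHermitian_iff_isSymm.mp ((hS.1.smul (IsSelfAdjoint.all _)).add hS.inv.1)
    · dsimp only
      rw [objective_eq_traceFunctional hβ Qt h (half_smul_add_inv_sub_sqrt hS hS2) rfl, hT,
        traceFunctional_traceFunctionalMinimizer hM hQtpd]
  · rintro _ ⟨Λ, ⟨-, hle⟩, rfl⟩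
    obtain ⟨hS, hΛ⟩ := posDef_sub_sqrt_and_eq_half_smul_add_inv hle
    dsimp only
    rw [objective_eq_traceFunctional hβ Qt h rfl hΛ]
    exact sqrt_two_mul_trace_sqrt_le_traceFunctional hM hQtpd.posSemidef.nonneg
      (hS.conjugate hD.inv)

/-- **Closed form of the ground state variational problem** (Proposition 5.2):
for positive definite `Q̃` and `β ∈ (0,∞)^n`,
`inf_{Λ ≥ √2 I} ( ¼ hᵀ𝛃^{-1/2}(Λ − √(Λ² − 2I))𝛃^{-1/2}h + Tr(Λ 𝛃^{1/2}Q̃𝛃^{1/2}) )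
  = GSE(β, h, Q̃)`. -/
theorem ground_state_closed_form (n : ℕ) (hn : 1 ≤ n)
    (Qt : Matrix (Fin n) (Fin n) ℝ) (hQtsym : Qt.IsSymm) (hQtpd : Qt.PosDef)
    (β : Fin n → ℝ) (hβ : ∀ k, 0 < β k) (h : Fin n → ℝ) :
    sInf ((fun Λ : Matrix (Fin n) (Fin n) ℝ =>
        (1 / 4) * dot h (Matrix.mulVec
            (invSqrtDiag β *
              (Λ - msqrt (Λ * Λ - (2 : ℝ) • (1 : Matrix (Fin n) (Fin n) ℝ))) *
              invSqrtDiag β) h)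
          + Matrix.trace (Λ * (sqrtDiag β * Qt * sqrtDiag β))) ''
      {Λ : Matrix (Fin n) (Fin n) ℝ | Λ.IsSymm ∧
        (Λ - Real.sqrt 2 • (1 : Matrix (Fin n) (Fin n) ℝ)).PosSemidef})
    = GSE n β h Qt :=
  ground_state_closed_form_general n Qt hQtpd β hβ h

end
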